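/- For positive integers n and m, sum_{k=0}^n (a;q)_k (b;q)_k (q^m;q)_{n-k} / ((q;q)_k (q;q)_{n-k}) * (-ab)^{n-k} q^{binom(n,2)-binom(k,2)} = (a;q)_{n+m} * sum_{k=0}^n (-b)^k q^{binom(k,2)} / ((q;q)_k (q;q)_{n-k} (a q^{n-k};q)_m). (Generalized Carlitz identity) -/

import Mathlib

/-!
Expand `(b;q)_k` by the q-binomial theorem and exchange the two summations, collecting the terms
with the same total power `r` of `b`. With `t = n - r`, the inner sum over `l = n - k` is a
q-Chu–Vandermonde sum with `x = q^m`, `y = a q^t`, so the left side equals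
`∑_r (-b)^r q^(r choose 2) (a;q)_t (a q^(t+m);q)_r / ((q;q)_r (q;q)_t)`.
Splitting `(a;q)_(n+m) = (a;q)_t (a q^t;q)_m (a q^(t+m);q)_r` turns this into the right side.
-/

open Finset

/-- The q-Pochhammer symbol `(a; q)_n = ∏_{j=0}^{n-1} (1 - a q^j)`. -/
noncomputable def qPoch (a q : ℂ) (n : ℕ) : ℂ := ∏ j ∈ Finset.range n, (1 - a * q ^ j)

lemma Nat.add_choose_two (a b : ℕ) : (a + b).choose 2 = a.choose 2 + b.choose 2 + a * b := by
  simp [Nat.add_choose_eq, Finset.Nat.antidiagonal_succ]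
  ring

lemma Finset.sum_range_sum_range_reflect {M : Type*} [AddCommMonoid M] (f : ℕ → ℕ → M) (n : ℕ) :
    ∑ k ∈ range (n + 1), ∑ j ∈ range (k + 1), f k j
      = ∑ r ∈ range (n + 1), ∑ l ∈ range (r + 1), f (n - l) (r - l) := by
  rw [sum_sigma', sum_sigma']
  refine sum_nbij' (fun p ↦ ⟨p.2 + (n - p.1), n - p.1⟩) (fun p ↦ ⟨n - p.2, p.1 - p.2⟩)
    ?_ ?_ ?_ ?_ ?_ <;>
  rintro ⟨x, y⟩ h <;> simp only [mem_sigma, mem_range] at h ⊢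
  all_goals first | omega | (congr 2 <;> omega)

lemma qPoch_zero (a q : ℂ) : qPoch a q 0 = 1 := prod_range_zero _

lemma qPoch_succ (a q : ℂ) (n : ℕ) : qPoch a q (n + 1) = qPoch a q n * (1 - a * q ^ n) :=
  prod_range_succ _ n

lemma qPoch_add (a q : ℂ) (s t : ℕ) :
    qPoch a q (s + t) = qPoch a q s * qPoch (a * q ^ s) q t := by
  simp only [qPoch, prod_range_add, pow_add, mul_assoc]

lemma qPoch_ne_zero {a q : ℂ} {n : ℕ} (h : ∀ j < n, a * q ^ j ≠ 1) : qPoch a q n ≠ 0 :=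
  prod_ne_zero_iff.mpr fun j hj ↦ sub_ne_zero.mpr (h j (mem_range.mp hj)).symm

lemma qPoch_self_ne_zero {q : ℂ} (hq : ‖q‖ < 1) (n : ℕ) : qPoch q q n ≠ 0 :=
  qPoch_ne_zero fun j _ h ↦ by
    have := pow_lt_one₀ (norm_nonneg q) hq j.succ_ne_zero
    rw [← norm_pow, pow_succ', h, norm_one] at this
    exact this.false

/-- The Gaussian binomial coefficient `[n, k]_q`, defined by the q-Pascal rule and hence
meaningful even where some `(q;q)_j` vanishes. -/
noncomputable def qBinom (q : ℂ) : ℕ → ℕ → ℂ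
  | _, 0 => 1
  | 0, _ + 1 => 0
  | n + 1, k + 1 => qBinom q n (k + 1) + q ^ (n - k) * qBinom q n k

@[simp] lemma qBinom_zero_right (q : ℂ) (n : ℕ) : qBinom q n 0 = 1 := by cases n <;> rfl

lemma qBinom_succ_succ (q : ℂ) (n k : ℕ) :
    qBinom q (n + 1) (k + 1) = qBinom q n (k + 1) + q ^ (n - k) * qBinom q n k := rfl

lemma qBinom_eq_zero_of_lt (q : ℂ) {n k : ℕ} (h : n < k) : qBinom q n k = 0 := by
  induction n generalizing k with
  | zero => obtain ⟨k, rfl⟩ := Nat.exists_eq_succ_of_ne_zero h.ne'; rfl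
  | succ n ih =>
    obtain ⟨k, rfl⟩ := Nat.exists_eq_succ_of_ne_zero (n.succ_pos.trans h).ne'
    rw [qBinom_succ_succ, ih (by omega), ih (by omega), mul_zero, add_zero]

@[simp] lemma qBinom_self (q : ℂ) (n : ℕ) : qBinom q n n = 1 := by
  induction n with
  | zero => rfl
  | succ n ih => rw [qBinom_succ_succ, qBinom_eq_zero_of_lt q n.lt_succ_self, ih]; simp

lemma qBinom_add_mul_qPoch (q : ℂ) (s t : ℕ) :
    qBinom q (s + t) s * (qPoch q q s * qPoch q q t) = qPoch q q (s + t) := by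
  induction t generalizing s with
  | zero => simp [qPoch_zero]
  | succ t iht =>
    induction s with
    | zero => simp [qPoch_zero]
    | succ s ihs =>
      have hA : qBinom q (s + t + 1) (s + 1) * (qPoch q q (s + 1) * qPoch q q t)
          = qPoch q q (s + t + 1) := by
        simpa only [Nat.add_right_comm] using iht (s + 1)
      have hB : qBinom q (s + t + 1) s * (qPoch q q s * qPoch q q (t + 1))
          = qPoch q q (s + t + 1) := ihs
      rw [show s + 1 + (t + 1) = s + t + 1 + 1 by ring, qBinom_succ_succ,
        show s + t + 1 - s = t + 1 by omega]
      rw [qPoch_succ q q t] at hB ⊢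
      rw [qPoch_succ q q s] at hA ⊢
      rw [qPoch_succ q q (s + t + 1)]
      linear_combination (1 - q * q ^ t) * hA + q ^ (t + 1) * (1 - q * q ^ s) * hB

lemma sum_range_qBinom_succ_mul (q : ℂ) (g : ℕ → ℂ) (n : ℕ) :
    ∑ j ∈ range (n + 2), qBinom q (n + 1) j * g j
      = ∑ j ∈ range (n + 1), qBinom q n j * (g j + q ^ (n - j) * g (j + 1)) := by
  have hshift : ∑ j ∈ range (n + 1), qBinom q n (j + 1) * g (j + 1) + g 0
      = ∑ j ∈ range (n + 1), qBinom q n j * g j := by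
    rw [sum_range_succ, qBinom_eq_zero_of_lt q n.lt_succ_self, sum_range_succ' _ n]
    simp
  rw [sum_range_succ', qBinom_zero_right, one_mul]
  simp only [qBinom_succ_succ, add_mul, mul_add, sum_add_distrib, ← hshift]
  rw [add_right_comm]
  exact congrArg _ (sum_congr rfl fun j _ ↦ by ring)

theorem qPoch_eq_sum_qBinom (b q : ℂ) (n : ℕ) :
    qPoch b q n = ∑ j ∈ range (n + 1), qBinom q n j * (-b) ^ j * q ^ j.choose 2 := by
  induction n with
  | zero => simp [qPoch_zero]
  | succ n ih =>
    simp only [mul_assoc]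
    rw [sum_range_qBinom_succ_mul, qPoch_succ, ih, sum_mul]
    refine sum_congr rfl fun j hj ↦ ?_
    have hpow : q ^ (n - j) * q ^ (j + 1).choose 2 = q ^ n * q ^ j.choose 2 := by
      rw [← pow_add, ← pow_add, Nat.add_choose_two j 1, Nat.choose_eq_zero_of_lt one_lt_two,
        mul_one]
      have := mem_range_succ_iff.mp hj
      congr 1
      omega
    linear_combination (-(qBinom q n j * (-b) ^ (j + 1))) * hpow

theorem qPoch_mul_eq_sum_qBinom (x y q : ℂ) (r : ℕ) :
    qPoch (x * y) q r
      = ∑ l ∈ range (r + 1), qBinom q r l * (qPoch x q l * qPoch y q (r - l) * y ^ l) := by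
  induction r with
  | zero => simp [qPoch_zero]
  | succ r ih =>
    rw [sum_range_qBinom_succ_mul, qPoch_succ, ih, sum_mul]
    refine sum_congr rfl fun l hl ↦ ?_
    obtain ⟨s, rfl⟩ := exists_add_of_le (mem_range_succ_iff.mp hl)
    rw [show l + s + 1 - l = s + 1 by omega, show l + s + 1 - (l + 1) = s by omega,
      Nat.add_sub_cancel_left, qPoch_succ x, qPoch_succ y, pow_add q l s]
    ring

lemma qBinom_add_eq_div {q : ℂ} (hqq : ∀ j, qPoch q q j ≠ 0) (s t : ℕ) :
    qBinom q (s + t) s = qPoch q q (s + t) / (qPoch q q s * qPoch q q t) :=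
  eq_div_of_mul_eq (mul_ne_zero (hqq s) (hqq t)) (qBinom_add_mul_qPoch q s t)

/-- The `(k, j) = (n - l, r - l)` term of the left side after expanding `(b;q)_k`, where
`n = r + t`. -/
lemma carlitz_summand_eq {a b q : ℂ} (hqq : ∀ j, qPoch q q j ≠ 0) (m t : ℕ) {l r : ℕ}
    (hl : l ≤ r) :
    qPoch a q (r + t - l) * (qBinom q (r + t - l) (r - l) * (-b) ^ (r - l) * q ^ (r - l).choose 2)
        * qPoch (q ^ m) q (r + t - (r + t - l))
        / (qPoch q q (r + t - l) * qPoch q q (r + t - (r + t - l)))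
        * (-(a * b)) ^ (r + t - (r + t - l)) * q ^ ((r + t).choose 2 - (r + t - l).choose 2)
      = (-b) ^ r * q ^ r.choose 2 * qPoch a q t / (qPoch q q r * qPoch q q t)
        * (qBinom q r l * (qPoch (q ^ m) q l * qPoch (a * q ^ t) q (r - l) * (a * q ^ t) ^ l)) := by
  obtain ⟨s, rfl⟩ := exists_add_of_le hl
  have hexp : (l + s + t).choose 2 - (s + t).choose 2 = l.choose 2 + l * s + l * t := by
    rw [add_assoc l, Nat.add_choose_two l (s + t), mul_add]
    omega
  rw [show l + s + t - l = s + t by omega, show l + s + t - (s + t) = l by omega,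
    Nat.add_sub_cancel_left, hexp, Nat.add_choose_two l s, qBinom_add_eq_div hqq,
    qBinom_add_eq_div hqq, add_comm s t, qPoch_add a q t s]
  have := hqq l; have := hqq s; have := hqq t; have := hqq (l + s); have := hqq (t + s)
  field_simp
  ring

lemma carlitz_rhs_term_eq {a q : ℂ} (hqq : ∀ j, qPoch q q j ≠ 0) {m t : ℕ}
    (ha : qPoch (a * q ^ t) q m ≠ 0) (b : ℂ) (r : ℕ) :
    qPoch a q (r + t + m) * ((-b) ^ r * q ^ r.choose 2
        / (qPoch q q r * qPoch q q t * qPoch (a * q ^ t) q m))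
      = (-b) ^ r * q ^ r.choose 2 * qPoch a q t / (qPoch q q r * qPoch q q t)
        * qPoch (q ^ m * (a * q ^ t)) q r := by
  rw [show r + t + m = t + m + r by ring, qPoch_add, qPoch_add a q t m,
    mul_comm (q ^ m), mul_assoc a, ← pow_add]
  have := hqq r; have := hqq t
  field_simp

theorem generalized_carlitz_general (n m : ℕ) (a b q : ℂ)
    (hq : ‖q‖ < 1) (ha : ∀ j ≤ n + m - 1, a * q ^ j ≠ 1) :
    ∑ k ∈ range (n + 1),
        qPoch a q k * qPoch b q k * qPoch (q ^ m) q (n - k)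
          / (qPoch q q k * qPoch q q (n - k))
          * (-(a * b)) ^ (n - k) * q ^ (n.choose 2 - k.choose 2)
      = qPoch a q (n + m) *
          ∑ k ∈ range (n + 1),
            (-b) ^ k * q ^ (k.choose 2)
              / (qPoch q q k * qPoch q q (n - k) * qPoch (a * q ^ (n - k)) q m) := by
  have hqq := qPoch_self_ne_zero hq
  conv_lhs => simp only [qPoch_eq_sum_qBinom b q, mul_sum, sum_mul, sum_div]
  rw [sum_range_sum_range_reflect, mul_sum]
  refine sum_congr rfl fun r hr ↦ ?_
  obtain ⟨t, rfl⟩ := exists_add_of_le (mem_range_succ_iff.mp hr)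
  have haq : qPoch (a * q ^ t) q m ≠ 0 := qPoch_ne_zero fun i hi ↦ by
    rw [mul_assoc, ← pow_add]
    exact ha _ (by omega)
  rw [sum_congr rfl fun l hl ↦ carlitz_summand_eq hqq m t (mem_range_succ_iff.mp hl), ← mul_sum,
    ← qPoch_mul_eq_sum_qBinom, Nat.add_sub_cancel_left, carlitz_rhs_term_eq hqq haq]

/-- The generalized Carlitz identity. -/
theorem generalized_carlitz (n m : ℕ) (hn : 1 ≤ n) (hm : 1 ≤ m) (a b q : ℂ)
    (hq : ‖q‖ < 1) (ha : ∀ j ≤ n + m - 1, a * q ^ j ≠ 1) :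
    ∑ k ∈ range (n + 1),
        qPoch a q k * qPoch b q k * qPoch (q ^ m) q (n - k)
          / (qPoch q q k * qPoch q q (n - k))
          * (-(a * b)) ^ (n - k) * q ^ (n.choose 2 - k.choose 2)
      = qPoch a q (n + m) *
          ∑ k ∈ range (n + 1),
            (-b) ^ k * q ^ (k.choose 2)
              / (qPoch q q k * qPoch q q (n - k) * qPoch (a * q ^ (n - k)) q m) :=
  generalized_carlitz_general n m a b q hq ha
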